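/- For all integers b ≥ 3 and w₁, w₂ ≥ 1, one has k(b, w₁+w₂) ≤ k(b,w₁)·k(b,w₂). -/
import Mathlib

namespace MPAux

def cand (w : ℕ) : Finset (Multiset ℕ) :=
  ((w • (Finset.Icc 1 w).val).powerset).toFinset

def PF (b w : ℕ) : Finset (Fin b → Multiset ℕ) :=
  (Fintype.piFinset fun _ => cand w).filter
    fun F => (∀ i, ∀ x ∈ F i, 0 < x) ∧ (∑ i, (F i).sum) = w

def c (b w : ℕ) : ℕ := (PF b w).card

def sg (t : ℕ) : ℕ := ∑ p ∈ t.divisorsAntidiagonal, p.1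

lemma count_le_sum {m : Multiset ℕ} (hm : ∀ x ∈ m, 0 < x) (d : ℕ) :
    m.count d ≤ m.sum := by
  have h1 : Multiset.replicate (m.count d) d ≤ m := Multiset.le_iff_count.2 (by
    intro a
    rw [Multiset.count_replicate]
    split <;> simp_all)
  obtain ⟨u, hu⟩ := Multiset.le_iff_exists_add.1 h1
  rcases Nat.eq_zero_or_pos d with hd | hd
  · have : m.count d = 0 := by
      by_contra h
      have := hm d (Multiset.count_pos.1 (Nat.pos_of_ne_zero h))
      omega
    omega
  · calc m.count d ≤ m.count d * d := Nat.le_mul_of_pos_right _ hd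
    _ = (Multiset.replicate (m.count d) d).sum := by simp [Multiset.sum_replicate]
    _ ≤ m.sum := by
        have hms : m.sum = (Multiset.replicate (m.count d) d).sum + u.sum := by
          conv_lhs => rw [hu]
          rw [Multiset.sum_add]
        omega

lemma mem_elt_le_sum {m : Multiset ℕ} {x : ℕ} (hx : x ∈ m) : x ≤ m.sum := by
  obtain ⟨u, hu⟩ := Multiset.le_iff_exists_add.1 (Multiset.singleton_le.2 hx)
  rw [hu, Multiset.sum_add]; simp

lemma mem_PF {b w : ℕ} {F : Fin b → Multiset ℕ} :
    F ∈ PF b w ↔ (∀ i, ∀ x ∈ F i, 0 < x) ∧ (∑ i, (F i).sum) = w := by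
  rw [PF, Finset.mem_filter]
  constructor
  · tauto
  · rintro ⟨hpos, hsum⟩
    refine ⟨Fintype.mem_piFinset.2 fun i => ?_, hpos, hsum⟩
    rw [cand, Multiset.mem_toFinset, Multiset.mem_powerset, Multiset.le_iff_count]
    intro a
    rw [Multiset.count_nsmul]
    have hsle : (F i).sum ≤ w := by
      rw [← hsum]
      exact Finset.single_le_sum (f := fun i => (F i).sum) (fun _ _ => Nat.zero_le _)
        (Finset.mem_univ i)
    rcases Nat.eq_zero_or_pos ((F i).count a) with h | h
    · simp [h]
    · have ha : a ∈ F i := Multiset.count_pos.1 h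
      have ha1 : 0 < a := hpos i a ha
      have ha2 : a ≤ w := le_trans (mem_elt_le_sum ha) hsle
      have : a ∈ Finset.Icc 1 w := Finset.mem_Icc.2 ⟨ha1, ha2⟩
      rw [Multiset.count_eq_one_of_mem (Finset.nodup _) this]
      have := count_le_sum (hpos i) a
      omega

lemma le_sg {t : ℕ} (ht : 1 ≤ t) : t ≤ sg t := by
  have h : (t, 1) ∈ t.divisorsAntidiagonal := by
    rw [Nat.mem_divisorsAntidiagonal]; omega
  calc t = (fun p : ℕ × ℕ => p.1) (t, 1) := rfl
  _ ≤ sg t := Finset.single_le_sum (fun _ _ => Nat.zero_le _) h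

lemma sg_le {t : ℕ} : 2 * sg t ≤ t * (t + 1) := by
  have h1 : sg t ≤ ∑ d ∈ Finset.Icc 1 t, d := by
    rw [sg]
    have hinj : ∀ p ∈ t.divisorsAntidiagonal, ∀ q ∈ t.divisorsAntidiagonal,
        p.1 = q.1 → p = q := by
      intro p hp q hq hpq
      rw [Nat.mem_divisorsAntidiagonal] at hp hq
      rcases p with ⟨p1, p2⟩; rcases q with ⟨q1, q2⟩
      simp only at hpq ⊢
      subst hpq
      obtain ⟨e1, ht0⟩ := hp
      obtain ⟨e2, -⟩ := hq
      simp only at e1 e2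
      have : p2 = q2 := by
        rcases Nat.eq_zero_or_pos p1 with h | h
        · subst h; simp at e1; omega
        · exact Nat.eq_of_mul_eq_mul_left h (e1.trans e2.symm)
      simp [this]
    rw [(Finset.sum_image (g := (Prod.fst : ℕ × ℕ → ℕ)) (f := fun d => d) hinj).symm]
    apply Finset.sum_le_sum_of_subset
    intro d hd
    simp only [Finset.mem_image] at hd
    obtain ⟨p, hp, rfl⟩ := hd
    rw [Nat.mem_divisorsAntidiagonal] at hp
    rw [Finset.mem_Icc]
    constructor
    · rcases Nat.eq_zero_or_pos p.1 with h | h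
      · exfalso; rw [← hp.1] at hp; simp [h] at hp
      · omega
    · calc p.1 ≤ p.1 * p.2 := Nat.le_mul_of_pos_right _ (by
          rcases Nat.eq_zero_or_pos p.2 with h | h
          · exfalso; rw [← hp.1] at hp; simp [h] at hp
          · omega)
      _ = t := hp.1
  have h2 : (∑ d ∈ Finset.Icc 1 t, d) * 2 = t * (t + 1) := by
    have heq : ∑ d ∈ Finset.Icc 1 t, d = ∑ d ∈ Finset.range (t + 1), d := by
      apply Finset.sum_subset
      · intro x hx
        rw [Finset.mem_Icc] at hx
        rw [Finset.mem_range]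
        omega
      · intro x hx hnx
        rw [Finset.mem_range] at hx
        rw [Finset.mem_Icc] at hnx
        omega
    rw [heq, Finset.sum_range_id_mul_two]
    simp [Nat.mul_comm]
  omega

lemma multiset_sum_eq (N : ℕ) (m : Multiset ℕ) (hpos : ∀ x ∈ m, 0 < x)
    (hle : m.sum ≤ N) : m.sum = ∑ d ∈ Finset.Icc 1 N, d * m.count d := by
  induction m using Multiset.induction_on with
  | empty => simp
  | cons a s ih =>
    have hs : ∀ x ∈ s, 0 < x := fun x hx => hpos x (Multiset.mem_cons_of_mem hx)
    rw [Multiset.sum_cons] at hle ⊢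
    have hsle : s.sum ≤ N := by omega
    have ha : a ∈ Finset.Icc 1 N := by
      rw [Finset.mem_Icc]
      exact ⟨hpos a (Multiset.mem_cons_self a s), by omega⟩
    rw [ih hs hsle]
    have : ∀ d ∈ Finset.Icc 1 N, d * (a ::ₘ s).count d
        = d * s.count d + (if d = a then a else 0) := by
      intro d _
      rw [Multiset.count_cons]
      split
      · rename_i hda
        subst hda
        simp [Nat.mul_add]
      · rename_i hda
        simp [hda]
    rw [Finset.sum_congr rfl this, Finset.sum_add_distrib, Finset.sum_ite_eq' _ a]
    simp [ha, Nat.add_comm]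

lemma count_card (N : ℕ) (d cnt : ℕ) (h : cnt ≤ N) :
    d * cnt = ∑ k ∈ Finset.Icc 1 N, if k ≤ cnt then d else 0 := by
  rw [← Finset.sum_filter]
  have : (Finset.Icc 1 N).filter (fun k => k ≤ cnt) = Finset.Icc 1 cnt := by
    ext x; simp [Finset.mem_Icc, Finset.mem_filter]; omega
  rw [this, Finset.sum_const, Nat.card_Icc]
  simp [Nat.mul_comm]

lemma sum_update (b : ℕ) (G : Fin b → Multiset ℕ) (i : Fin b) (X : Multiset ℕ) :
    ∑ j, (Function.update G i X j).sum = X.sum + ∑ j ∈ Finset.univ \ {i}, (G j).sum := by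
  have h : (fun j => (Function.update G i X j).sum)
      = Function.update (fun j => (G j).sum) i X.sum := by
    funext j
    rw [Function.update_apply, Function.update_apply]
    split <;> rfl
  calc ∑ j, (Function.update G i X j).sum
      = ∑ j, Function.update (fun j => (G j).sum) i X.sum j := by rw [h]
    _ = X.sum + ∑ j ∈ Finset.univ \ {i}, (G j).sum :=
        Finset.sum_update_of_mem (Finset.mem_univ i) _ _

lemma sum_split (b : ℕ) (G : Fin b → Multiset ℕ) (i : Fin b) :
    ∑ j, (G j).sum = (G i).sum + ∑ j ∈ Finset.univ \ {i}, (G j).sum := by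
  rw [← Finset.erase_eq, ← Finset.add_sum_erase _ _ (Finset.mem_univ i)]

lemma c_zero (b : ℕ) : c b 0 = 1 := by
  have : PF b 0 = {fun _ => (0 : Multiset ℕ)} := by
    ext F
    rw [mem_PF, Finset.mem_singleton]
    constructor
    · rintro ⟨hpos, hsum⟩
      funext i
      have hz : (F i).sum = 0 := by
        have h2 : (F i).sum ≤ ∑ j, (F j).sum := Finset.single_le_sum
          (f := fun i => (F i).sum) (fun _ _ => Nat.zero_le _) (Finset.mem_univ i)
        omega
      ext x
      simp only [Multiset.count_zero]
      by_contra h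
      have hx : x ∈ F i := Multiset.count_pos.1 (Nat.pos_of_ne_zero h)
      have := hpos i x hx
      have := mem_elt_le_sum hx
      omega
    · rintro rfl
      simp
  rw [c, this, Finset.card_singleton]

lemma card_filter_count (b N d k : ℕ) (i : Fin b) (hd : 1 ≤ d) (hk : 1 ≤ k) :
    ((PF b N).filter fun F => k ≤ (F i).count d).card
      = if d * k ≤ N then c b (N - d * k) else 0 := by
  have hrsum : (Multiset.replicate k d).sum = d * k := by
    rw [Multiset.sum_replicate]; simp [Nat.mul_comm]
  split
  case isTrue hdk =>
    rw [c]
    apply Finset.card_bij'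
      (i := fun F _ => Function.update F i (F i - Multiset.replicate k d))
      (j := fun G _ => Function.update G i (Multiset.replicate k d + G i))
    -- left inverse
    · intro F hF
      rw [Finset.mem_filter] at hF
      obtain ⟨hFP, hcnt⟩ := hF
      have hle : Multiset.replicate k d ≤ F i := by
        rw [Multiset.le_iff_count]
        intro a
        rw [Multiset.count_replicate]
        split
        · rename_i h; subst h; exact hcnt
        · exact Nat.zero_le _
      rw [Function.update_idem, Function.update_self,
        add_tsub_cancel_of_le hle, Function.update_eq_self]
    -- right inverse
    · intro G hG
      rw [Function.update_idem, Function.update_self, add_tsub_cancel_left,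
        Function.update_eq_self]
    -- hi : forward map lands in PF b (N - d*k)
    · intro F hF
      rw [Finset.mem_filter] at hF
      obtain ⟨hFP, hcnt⟩ := hF
      rw [mem_PF] at hFP
      obtain ⟨hpos, hsum⟩ := hFP
      have hle : Multiset.replicate k d ≤ F i := by
        rw [Multiset.le_iff_count]
        intro a
        rw [Multiset.count_replicate]
        split
        · rename_i h; subst h; exact hcnt
        · exact Nat.zero_le _
      have hsub : (Multiset.replicate k d).sum + (F i - Multiset.replicate k d).sum
          = (F i).sum := by
        rw [← Multiset.sum_add, add_tsub_cancel_of_le hle]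
      rw [mem_PF]
      constructor
      · intro j x hx
        rcases eq_or_ne j i with rfl | hne
        · rw [Function.update_self] at hx
          exact hpos j x (Multiset.mem_of_le (tsub_le_self) hx)
        · rw [Function.update_of_ne hne] at hx
          exact hpos j x hx
      · rw [sum_update]
        have h2 := sum_split b F i
        rw [hsum] at h2
        omega
    -- hj : backward map lands in filter
    · intro G hG
      rw [mem_PF] at hG
      obtain ⟨hpos, hsum⟩ := hG
      rw [Finset.mem_filter]
      refine ⟨?_, ?_⟩
      · rw [mem_PF]
        constructor
        · intro j x hx
          rcases eq_or_ne j i with rfl | hne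
          · rw [Function.update_self, Multiset.mem_add] at hx
            rcases hx with hx | hx
            · rw [Multiset.eq_of_mem_replicate hx]; omega
            · exact hpos j x hx
          · rw [Function.update_of_ne hne] at hx
            exact hpos j x hx
        · rw [sum_update]
          have h2 := sum_split b G i
          rw [hsum] at h2
          rw [Multiset.sum_add, hrsum]
          omega
      · rw [Function.update_self, Multiset.count_add, Multiset.count_replicate]
        simp
  case isFalse hdk =>
    rw [Finset.card_eq_zero, Finset.eq_empty_iff_forall_notMem]
    intro F hF
    rw [Finset.mem_filter, mem_PF] at hF
    obtain ⟨⟨hpos, hsum⟩, hcnt⟩ := hF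
    have hle : Multiset.replicate k d ≤ F i := by
      rw [Multiset.le_iff_count]
      intro a
      rw [Multiset.count_replicate]
      split
      · rename_i h; subst h; exact hcnt
      · exact Nat.zero_le _
    have h1 : (Multiset.replicate k d).sum ≤ (F i).sum := by
      obtain ⟨u, hu⟩ := Multiset.le_iff_exists_add.1 hle
      rw [hu, Multiset.sum_add]; omega
    have h2 : (F i).sum ≤ N := by
      rw [← hsum]
      exact Finset.single_le_sum (f := fun j => (F j).sum)
        (fun _ _ => Nat.zero_le _) (Finset.mem_univ i)
    omega

lemma regroup (b N : ℕ) :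
    (∑ d ∈ Finset.Icc 1 N, ∑ k ∈ Finset.Icc 1 N,
        if d * k ≤ N then d * c b (N - d * k) else 0)
      = ∑ t ∈ Finset.Icc 1 N, sg t * c b (N - t) := by
  rw [← Finset.sum_product']
  rw [← Finset.sum_filter]
  have hr : ∀ t ∈ Finset.Icc 1 N, sg t * c b (N - t)
      = ∑ p ∈ t.divisorsAntidiagonal, p.1 * c b (N - t) := by
    intro t _
    rw [sg, Finset.sum_mul]
  rw [Finset.sum_congr rfl hr]
  rw [Finset.sum_sigma']
  apply Finset.sum_nbij' (i := fun p => ⟨p.1 * p.2, p⟩) (j := fun q => q.2)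
  · intro p hp
    simp only [Finset.mem_filter, Finset.mem_product, Finset.mem_Icc] at hp
    obtain ⟨⟨⟨hd1, hdN⟩, ⟨hk1, hkN⟩⟩, hdk⟩ := hp
    refine Finset.mem_sigma.2 ⟨Finset.mem_Icc.2 ⟨?_, hdk⟩, ?_⟩
    · exact Nat.one_le_iff_ne_zero.2 (Nat.mul_ne_zero (by omega) (by omega))
    · rw [Nat.mem_divisorsAntidiagonal]
      exact ⟨rfl, Nat.mul_ne_zero (by omega) (by omega)⟩
  · intro q hq
    rw [Finset.mem_sigma, Finset.mem_Icc, Nat.mem_divisorsAntidiagonal] at hq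
    obtain ⟨⟨ht1, htN⟩, heq, hne⟩ := hq
    simp only [Finset.mem_filter, Finset.mem_product, Finset.mem_Icc]
    have hd0 : q.2.1 ≠ 0 := by rintro h; rw [h] at heq; simp at heq; omega
    have hk0 : q.2.2 ≠ 0 := by rintro h; rw [h] at heq; simp at heq; omega
    have hdle : q.2.1 ≤ q.1 := by
      calc q.2.1 ≤ q.2.1 * q.2.2 := Nat.le_mul_of_pos_right _ (by omega)
      _ = q.1 := heq
    have hkle : q.2.2 ≤ q.1 := by
      calc q.2.2 ≤ q.2.1 * q.2.2 := Nat.le_mul_of_pos_left _ (by omega)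
      _ = q.1 := heq
    exact ⟨⟨⟨by omega, by omega⟩, ⟨by omega, by omega⟩⟩, by rw [heq]; exact htN⟩
  · intro p _; rfl
  · intro q hq
    rw [Finset.mem_sigma, Nat.mem_divisorsAntidiagonal] at hq
    obtain ⟨-, heq, -⟩ := hq
    exact Sigma.ext heq (by rfl)
  · intro p _; rfl

lemma sum_le_of_memPF {b w : ℕ} {F : Fin b → Multiset ℕ} (h : F ∈ PF b w) (i : Fin b) :
    (F i).sum ≤ w := by
  rw [mem_PF] at h
  have h2 : (F i).sum ≤ ∑ j, (F j).sum := Finset.single_le_sum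
    (f := fun i => (F i).sum) (fun _ _ => Nat.zero_le _) (Finset.mem_univ i)
  omega

lemma recurrence (b N : ℕ) :
    N * c b N = b * ∑ t ∈ Finset.Icc 1 N, sg t * c b (N - t) := by
  have step1 : N * c b N = ∑ F ∈ PF b N, ∑ i, (F i).sum := by
    rw [c, Nat.mul_comm, ← smul_eq_mul, ← Finset.sum_const]
    apply Finset.sum_congr rfl
    intro F hF
    exact (mem_PF.1 hF).2.symm
  rw [step1]
  have step2 : ∀ F ∈ PF b N, ∀ i : Fin b,
      (F i).sum = ∑ d ∈ Finset.Icc 1 N, ∑ k ∈ Finset.Icc 1 N,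
        if k ≤ (F i).count d then d else 0 := by
    intro F hF i
    have hpos := (mem_PF.1 hF).1 i
    have hsle : (F i).sum ≤ N := sum_le_of_memPF hF i
    rw [multiset_sum_eq N _ hpos hsle]
    apply Finset.sum_congr rfl
    intro d _
    exact count_card N d _ (le_trans (count_le_sum hpos d) hsle)
  calc ∑ F ∈ PF b N, ∑ i, (F i).sum
      = ∑ F ∈ PF b N, ∑ i : Fin b, ∑ d ∈ Finset.Icc 1 N, ∑ k ∈ Finset.Icc 1 N,
          (if k ≤ (F i).count d then d else 0) := by
        apply Finset.sum_congr rfl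
        intro F hF
        exact Finset.sum_congr rfl fun i _ => step2 F hF i
    _ = ∑ i : Fin b, ∑ d ∈ Finset.Icc 1 N, ∑ k ∈ Finset.Icc 1 N, ∑ F ∈ PF b N,
          (if k ≤ (F i).count d then d else 0) := by
        rw [Finset.sum_comm]
        apply Finset.sum_congr rfl
        intro i _
        rw [Finset.sum_comm]
        apply Finset.sum_congr rfl
        intro d _
        rw [Finset.sum_comm]
    _ = ∑ i : Fin b, ∑ d ∈ Finset.Icc 1 N, ∑ k ∈ Finset.Icc 1 N,
          (if d * k ≤ N then d * c b (N - d * k) else 0) := by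
        apply Finset.sum_congr rfl; intro i _
        apply Finset.sum_congr rfl; intro d hd
        apply Finset.sum_congr rfl; intro k hk
        rw [Finset.mem_Icc] at hd hk
        have hcard := card_filter_count b N d k i hd.1 hk.1
        calc (∑ F ∈ PF b N, if k ≤ (F i).count d then d else 0)
            = ∑ F ∈ (PF b N).filter (fun F => k ≤ (F i).count d), d :=
              (Finset.sum_filter _ _).symm
          _ = ((PF b N).filter (fun F => k ≤ (F i).count d)).card * d := by
              rw [Finset.sum_const, smul_eq_mul]
          _ = if d * k ≤ N then d * c b (N - d * k) else 0 := by
              rw [hcard]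
              split
              · exact Nat.mul_comm _ _
              · exact Nat.zero_mul d
    _ = ∑ i : Fin b, ∑ t ∈ Finset.Icc 1 N, sg t * c b (N - t) := by
        apply Finset.sum_congr rfl
        intro i _
        exact regroup b N
    _ = b * ∑ t ∈ Finset.Icc 1 N, sg t * c b (N - t) := by
        rw [Finset.sum_const, Finset.card_univ, Fintype.card_fin, smul_eq_mul]

lemma c_lower (b n : ℕ) (hb : 3 ≤ b) : (n + 1) * (n + 2) ≤ 2 * c b n := by
  classical
  have h0 : (0 : ℕ) < b := by omega
  have h1 : (1 : ℕ) < b := by omega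
  have h2 : (2 : ℕ) < b := by omega
  set i0 : Fin b := ⟨0, h0⟩ with hi0
  set i1 : Fin b := ⟨1, h1⟩ with hi1
  set i2 : Fin b := ⟨2, h2⟩ with hi2
  have h01 : i0 ≠ i1 := by simp [hi0, hi1, Fin.ext_iff]
  have h02 : i0 ≠ i2 := by simp [hi0, hi2, Fin.ext_iff]
  have h12 : i1 ≠ i2 := by simp [hi1, hi2, Fin.ext_iff]
  set T : Finset ((_ : ℕ) × ℕ) :=
    (Finset.range (n + 1)).sigma (fun x => Finset.range (n + 1 - x)) with hT
  have hcardT : 2 * T.card = (n + 1) * (n + 2) := by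
    rw [hT, Finset.card_sigma]
    have h1' : ∑ x ∈ Finset.range (n + 1), (Finset.range (n + 1 - x)).card
        = ∑ x ∈ Finset.range (n + 1), (n + 1 - x) := by simp
    have h2' : ∑ x ∈ Finset.range (n + 1), (n + 1 - x)
        = ∑ x ∈ Finset.range (n + 1), (x + 1) := by
      have hre := Finset.sum_range_reflect (fun j => j + 1) (n + 1)
      calc ∑ x ∈ Finset.range (n + 1), (n + 1 - x)
          = ∑ x ∈ Finset.range (n + 1), (n + 1 - 1 - x + 1) := by
            apply Finset.sum_congr rfl
            intro x hx
            rw [Finset.mem_range] at hx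
            omega
        _ = ∑ x ∈ Finset.range (n + 1), (x + 1) := hre
    have h3' : ∑ x ∈ Finset.range (n + 1), (x + 1) = ∑ x ∈ Finset.range (n + 2), x := by
      rw [Finset.sum_range_succ' (fun x => x) (n + 1)]
      simp
    have h4' : (∑ x ∈ Finset.range (n + 2), x) * 2 = (n + 2) * (n + 1) :=
      Finset.sum_range_id_mul_two (n + 2)
    have h5' : (n + 2) * (n + 1) = (n + 1) * (n + 2) := Nat.mul_comm _ _
    rw [h1', h2', h3']
    omega
  set g : (_ : ℕ) × ℕ → Fin b → ℕ := fun p j =>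
    if j = i0 then p.1 else if j = i1 then p.2 else if j = i2 then n - p.1 - p.2 else 0
    with hg
  have gv0 : ∀ p, g p i0 = p.1 := by intro p; simp [hg]
  have gv1 : ∀ p, g p i1 = p.2 := by intro p; simp [hg, Ne.symm h01]
  have gv2 : ∀ p, g p i2 = n - p.1 - p.2 := by
    intro p; simp [hg, Ne.symm h02, Ne.symm h12]
  set Φ : (_ : ℕ) × ℕ → (Fin b → Multiset ℕ) := fun p j => Multiset.replicate (g p j) 1
    with hΦ
  have hsum : ∀ p ∈ T, ∑ j, g p j = n := by
    intro p hp
    rw [hT, Finset.mem_sigma, Finset.mem_range, Finset.mem_range] at hp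
    have hxy : p.1 + p.2 ≤ n := by omega
    have hzero : ∀ j ∈ Finset.univ, j ∉ ({i0, i1, i2} : Finset (Fin b)) → g p j = 0 := by
      intro j _ hj
      simp only [Finset.mem_insert, Finset.mem_singleton] at hj
      push_neg at hj
      simp [hg, hj.1, hj.2.1, hj.2.2]
    rw [← Finset.sum_subset (Finset.subset_univ ({i0, i1, i2} : Finset (Fin b))) hzero]
    rw [Finset.sum_insert (by simp [h01, h02]), Finset.sum_insert (by simp [h12]),
      Finset.sum_singleton, gv0, gv1, gv2]
    omega
  have hmem : ∀ p ∈ T, Φ p ∈ PF b n := by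
    intro p hp
    rw [mem_PF]
    constructor
    · intro j x hx
      rw [hΦ] at hx
      simp only at hx
      rw [Multiset.eq_of_mem_replicate hx]
      omega
    · have hterm : ∀ j : Fin b, (Φ p j).sum = g p j := by
        intro j
        rw [hΦ]
        simp [Multiset.sum_replicate]
      rw [Finset.sum_congr rfl (fun j _ => hterm j)]
      exact hsum p hp
  have hinj : Set.InjOn Φ T := by
    intro p _ q _ hpq
    have e0 := congrFun hpq i0
    have e1 := congrFun hpq i1
    rw [hΦ] at e0 e1
    simp only at e0 e1
    have c0 := congrArg Multiset.card e0
    have c1 := congrArg Multiset.card e1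
    rw [Multiset.card_replicate, Multiset.card_replicate] at c0 c1
    rw [gv0, gv0] at c0
    rw [gv1, gv1] at c1
    rcases p with ⟨px, py⟩
    rcases q with ⟨qx, qy⟩
    simp only at c0 c1
    subst c0
    subst c1
    rfl
  have hcle := Finset.card_le_card_of_injOn Φ hmem hinj
  have hc : c b n = (PF b n).card := rfl
  omega

lemma sg_key (b n r : ℕ) (hb : 3 ≤ b) (hr : 1 ≤ r) (hrn : r ≤ n) :
    sg (n + r) ≤ sg r * c b n := by
  have h1 : 2 * sg (n + r) ≤ (n + r) * (n + r + 1) := sg_le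
  have h2 : (n + r) * (n + r + 1) ≤ r * ((n + 1) * (n + 2)) := by
    zify
    have hz1 : (1 : ℤ) ≤ (r : ℤ) := by exact_mod_cast hr
    have hz2 : (r : ℤ) ≤ (n : ℤ) := by exact_mod_cast hrn
    have key : (0 : ℤ) ≤ ((r : ℤ) - 1) * ((n : ℤ) * n + n - r) := by
      apply mul_nonneg
      · linarith
      · nlinarith
    nlinarith [key]
  have h3 : r * ((n + 1) * (n + 2)) ≤ r * (2 * c b n) :=
    Nat.mul_le_mul_left r (c_lower b n hb)
  have h4 : r * (2 * c b n) ≤ sg r * (2 * c b n) :=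
    Nat.mul_le_mul_right _ (le_sg hr)
  have : 2 * sg (n + r) ≤ 2 * (sg r * c b n) := by
    calc 2 * sg (n + r) ≤ (n + r) * (n + r + 1) := h1
      _ ≤ r * ((n + 1) * (n + 2)) := h2
      _ ≤ r * (2 * c b n) := h3
      _ ≤ sg r * (2 * c b n) := h4
      _ = 2 * (sg r * c b n) := by ring
  omega

lemma main_aux (b : ℕ) (hb : 3 ≤ b) (N : ℕ)
    (IH : ∀ M, M < N → ∀ m n, m + n = M → 1 ≤ m → 1 ≤ n → c b (m + n) ≤ c b m * c b n)
    (m n : ℕ) (hN : m + n = N) (hm : 1 ≤ m) (hmn : m ≤ n) :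
    c b (m + n) ≤ c b m * c b n := by
  have hn : 1 ≤ n := le_trans hm hmn
  have hrec := recurrence b (m + n)
  have hsplit : (∑ t ∈ Finset.Icc 1 (m + n), sg t * c b (m + n - t))
      = (∑ t ∈ Finset.Ioc 0 n, sg t * c b (m + n - t))
        + ∑ t ∈ Finset.Ioc n (m + n), sg t * c b (m + n - t) := by
    have hIccIoc : Finset.Icc 1 (m + n) = Finset.Ioc 0 (m + n) := by
      ext x; rw [Finset.mem_Icc, Finset.mem_Ioc]; omega
    rw [hIccIoc, ← Finset.sum_Ioc_consecutive _ (Nat.zero_le n) (Nat.le_add_left n m)]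
  have hpart1 : (∑ t ∈ Finset.Ioc 0 n, sg t * c b (m + n - t))
      ≤ c b m * ∑ t ∈ Finset.Icc 1 n, sg t * c b (n - t) := by
    have heq : Finset.Ioc 0 n = Finset.Icc 1 n := by
      ext x; rw [Finset.mem_Icc, Finset.mem_Ioc]; omega
    rw [heq, Finset.mul_sum]
    apply Finset.sum_le_sum
    intro t ht
    rw [Finset.mem_Icc] at ht
    have harg : m + n - t = m + (n - t) := by omega
    rw [harg]
    rcases eq_or_lt_of_le ht.2 with rfl | hlt
    · rw [Nat.sub_self, Nat.add_zero, c_zero, Nat.mul_one, Nat.mul_comm]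
    · have hIH := IH (m + (n - t)) (by omega) m (n - t) rfl hm (by omega)
      calc sg t * c b (m + (n - t)) ≤ sg t * (c b m * c b (n - t)) :=
            Nat.mul_le_mul_left _ hIH
        _ = c b m * (sg t * c b (n - t)) := by ring
  have hpart1' : (∑ t ∈ Finset.Ioc 0 n, sg t * c b (m + n - t))
      ≤ c b m * ∑ t ∈ Finset.Icc 1 n, sg t * c b (n - t) := hpart1
  have hpart2 : (∑ t ∈ Finset.Ioc n (m + n), sg t * c b (m + n - t))
      ≤ c b n * ∑ r ∈ Finset.Icc 1 m, sg r * c b (m - r) := by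
    have hre : (∑ t ∈ Finset.Ioc n (m + n), sg t * c b (m + n - t))
        = ∑ r ∈ Finset.Icc 1 m, sg (n + r) * c b (m - r) := by
      apply Finset.sum_nbij' (i := fun t => t - n) (j := fun r => n + r)
      · intro t ht
        rw [Finset.mem_Ioc] at ht
        rw [Finset.mem_Icc]
        omega
      · intro r hr
        rw [Finset.mem_Icc] at hr
        rw [Finset.mem_Ioc]
        omega
      · intro t ht
        rw [Finset.mem_Ioc] at ht
        omega
      · intro r hr
        rw [Finset.mem_Icc] at hr
        omega
      · intro t ht
        rw [Finset.mem_Ioc] at ht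
        have e1 : n + (t - n) = t := by omega
        have e2 : m - (t - n) = m + n - t := by omega
        rw [e1, e2]
    rw [hre, Finset.mul_sum]
    apply Finset.sum_le_sum
    intro r hr
    rw [Finset.mem_Icc] at hr
    calc sg (n + r) * c b (m - r) ≤ (sg r * c b n) * c b (m - r) :=
          Nat.mul_le_mul_right _ (sg_key b n r hb hr.1 (le_trans hr.2 hmn))
      _ = c b n * (sg r * c b (m - r)) := by ring
  have hn_rec := recurrence b n
  have hm_rec := recurrence b m
  have hfinal : (m + n) * c b (m + n) ≤ (m + n) * (c b m * c b n) := by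
    calc (m + n) * c b (m + n)
        = b * ∑ t ∈ Finset.Icc 1 (m + n), sg t * c b (m + n - t) := hrec
      _ = b * ((∑ t ∈ Finset.Ioc 0 n, sg t * c b (m + n - t))
            + ∑ t ∈ Finset.Ioc n (m + n), sg t * c b (m + n - t)) := by rw [hsplit]
      _ ≤ b * ((c b m * ∑ t ∈ Finset.Icc 1 n, sg t * c b (n - t))
            + c b n * ∑ r ∈ Finset.Icc 1 m, sg r * c b (m - r)) :=
          Nat.mul_le_mul_left _ (Nat.add_le_add hpart1' hpart2)
      _ = c b m * (b * ∑ t ∈ Finset.Icc 1 n, sg t * c b (n - t))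
            + c b n * (b * ∑ r ∈ Finset.Icc 1 m, sg r * c b (m - r)) := by ring
      _ = c b m * (n * c b n) + c b n * (m * c b m) := by rw [← hn_rec, ← hm_rec]
      _ = (m + n) * (c b m * c b n) := by ring
  have hpos : 0 < m + n := by omega
  exact Nat.le_of_mul_le_mul_left hfinal hpos

lemma main (b : ℕ) (hb : 3 ≤ b) :
    ∀ N m n, m + n = N → 1 ≤ m → 1 ≤ n → c b (m + n) ≤ c b m * c b n := by
  intro N
  induction N using Nat.strong_induction_on with
  | _ N IH =>
    intro m n hN hm hn
    rcases le_total m n with h | h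
    · exact main_aux b hb N IH m n hN hm h
    · have := main_aux b hb N IH n m (by omega) hn h
      rw [Nat.add_comm n m] at this
      rw [Nat.mul_comm]
      exact this

lemma sigma_eq_of_parts_eq (x y : Σ n : ℕ, n.Partition) (h : x.2.parts = y.2.parts) :
    x = y := by
  rcases x with ⟨nx, px⟩
  rcases y with ⟨ny, py⟩
  simp only at h
  have hn : nx = ny := by
    rw [← px.parts_sum, ← py.parts_sum, h]
  subst hn
  have hp : px = py := Nat.Partition.ext h
  rw [hp]

end MPAux

/-- `multipartitions b w` is the number of `b`-multipartitions of `w`, i.e. the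
number of `b`-tuples `(λ₁, …, λ_b)` of integer partitions with `|λ₁| + ⋯ + |λ_b| = w`. -/
noncomputable def multipartitions (b w : ℕ) : ℕ :=
  Nat.card {f : Fin b → Σ n : ℕ, n.Partition // (∑ i, (f i).1) = w}

lemma multipartitions_eq (b w : ℕ) : multipartitions b w = MPAux.c b w := by
  rw [multipartitions, MPAux.c, ← Nat.card_eq_finsetCard]
  apply Nat.card_congr
  refine ⟨fun f => ⟨fun i => (f.1 i).2.parts, ?_⟩,
    fun F => ⟨fun i => ⟨(F.1 i).sum,
      ⟨F.1 i, fun {x} hx => (MPAux.mem_PF.1 F.2).1 i x hx, rfl⟩⟩, ?_⟩, ?_, ?_⟩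
  · rw [MPAux.mem_PF]
    refine ⟨fun i x hx => (f.1 i).2.parts_pos hx, ?_⟩
    have h1 : ∀ i : Fin b, ((f.1 i).2.parts).sum = (f.1 i).1 :=
      fun i => (f.1 i).2.parts_sum
    rw [Finset.sum_congr rfl (fun i _ => h1 i)]
    exact f.2
  · exact (MPAux.mem_PF.1 F.2).2
  · intro f
    apply Subtype.ext
    funext i
    exact MPAux.sigma_eq_of_parts_eq _ _ rfl
  · intro F
    apply Subtype.ext
    funext i
    rfl

theorem multipartitions_add_le_mul (b w₁ w₂ : ℕ) (hb : 3 ≤ b) (hw₁ : 1 ≤ w₁) (hw₂ : 1 ≤ w₂) :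
    multipartitions b (w₁ + w₂) ≤ multipartitions b w₁ * multipartitions b w₂ := by
  rw [multipartitions_eq, multipartitions_eq, multipartitions_eq]
  exact MPAux.main b hb (w₁ + w₂) w₁ w₂ rfl hw₁ hw₂
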